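/- If after a write operation at least f+1 correct servers hold register timestamp ≥ ts, and a reader receives timestamp responses from 2f+1 distinct servers all reporting timestamps ≤ ts', where the reader contacts all n = 3f+1 servers and the at most f Byzantine servers may lie, then ts' ≥ ts. -/
import Mathlib

/-- If after a write at least `f+1` correct servers hold timestamp `≥ ts`, and
a reader receives responses from `≥ 2f+1` distinct servers (among `n = 3f+1`,
at most `f` Byzantine) all reporting timestamps `≤ ts'` — with correct servers
reporting their true timestamp — then `ts' ≥ ts`. -/
theorem stmt_5 (f ts ts' : ℕ) (S B W R : Finset ℕ) (t : ℕ → ℕ)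
    (hS : S.card = 3 * f + 1)
    (hBS : B ⊆ S) (hB : B.card ≤ f)
    (hWS : W ⊆ S \ B) (hW : f + 1 ≤ W.card)
    (hWts : ∀ s ∈ W, ts ≤ t s)
    (hRS : R ⊆ S) (hR : 2 * f + 1 ≤ R.card)
    (hRts : ∀ s ∈ R \ B, t s ≤ ts') :
    ts ≤ ts' := by
  have hWSsub : W ⊆ S := hWS.trans (Finset.sdiff_subset)
  have hu : (R ∪ W).card ≤ S.card := Finset.card_le_card (Finset.union_subset hRS hWSsub)
  have h := Finset.card_union_add_card_inter R W
  have hpos : 0 < (R ∩ W).card := by omega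
  obtain ⟨s, hs⟩ := Finset.card_pos.mp hpos
  have hsR := Finset.mem_inter.mp hs
  have hsW := hsR.2
  have hsB : s ∉ B := (Finset.mem_sdiff.mp (hWS hsW)).2
  exact le_trans (hWts s hsW) (hRts s (Finset.mem_sdiff.mpr ⟨hsR.1, hsB⟩))
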